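/- arXiv:1903.08488 — 5 statements merged into one kernel-verified Lean document; each statement's English description precedes it below -/
import Mathlib

section
/- Let N ≥ 1 and let {e_1, …, e_{2N}} be the canonical orthonormal basis of the Euclidean space ℝ^{2N}. Then the Kolmogorov N-width of the set {e_1, …, e_{2N}} equals 1/√2, i.e., inf over all N-dimensional linear subspaces V ⊆ ℝ^{2N} of max_{1 ≤ k ≤ 2N} inf_{v ∈ V} ‖e_k − v‖₂ = 1/√2. -/
/-!
For any `N`-dimensional subspace `V`, the squared distances of the `2N` basis vectors to `V` are
the squared norms of their projections onto `Vᗮ`, and these sum to `dim Vᗮ = N` (the trace of the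
projection); hence some basis vector is at distance at least `√(N / 2N) = 1/√2`. Conversely, the
span of `e_j + e_{j+N}` is `N`-dimensional and contains the midpoint of each pair `e_j, e_{j+N}`,
which lies at distance `‖e_j - e_{j+N}‖ / 2 = 1/√2` from both.
-/

open Metric Module

section Projection

variable {𝕜 E ι : Type*} [RCLike 𝕜] [NormedAddCommGroup E] [InnerProductSpace 𝕜 E]

theorem Submodule.infDist_eq_norm_starProjection_orthogonal (K : Submodule 𝕜 E)
    [K.HasOrthogonalProjection] (x : E) : infDist x K = ‖Kᗮ.starProjection x‖ := by
  rw [starProjection_orthogonal_val, starProjection_minimal, infDist_eq_iInf]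
  simp only [dist_eq_norm]
  rfl

variable [FiniteDimensional 𝕜 E] [Fintype ι]

theorem OrthonormalBasis.sum_norm_sq_starProjection (b : OrthonormalBasis ι 𝕜 E)
    (K : Submodule 𝕜 E) : ∑ i, ‖K.starProjection (b i)‖ ^ 2 = finrank 𝕜 K := by
  let f := stdOrthonormalBasis 𝕜 K
  have hf (x : E) : ‖K.starProjection x‖ ^ 2 = ∑ j, ‖inner 𝕜 (f j : E) x‖ ^ 2 := by
    rw [K.starProjection_apply, K.norm_coe, ← f.sum_sq_norm_inner_right]
    simp only [K.inner_orthogonalProjectionOnto_eq_of_mem_left]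
  calc ∑ i, ‖K.starProjection (b i)‖ ^ 2 = ∑ j, ∑ i, ‖inner 𝕜 (f j : E) (b i)‖ ^ 2 := by
        simp_rw [hf]; exact Finset.sum_comm
    _ = finrank 𝕜 K := by
        simp [b.sum_sq_norm_inner_left, K.norm_coe, f.orthonormal.1]

theorem OrthonormalBasis.sum_infDist_sq (b : OrthonormalBasis ι 𝕜 E) (K : Submodule 𝕜 E) :
    ∑ i, infDist (b i) K ^ 2 = finrank 𝕜 Kᗮ := by
  simp_rw [K.infDist_eq_norm_starProjection_orthogonal]
  exact b.sum_norm_sq_starProjection Kᗮ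

theorem OrthonormalBasis.sqrt_finrank_orthogonal_div_card_le_iSup_infDist [Nonempty ι]
    (b : OrthonormalBasis ι 𝕜 E) (K : Submodule 𝕜 E) :
    √(finrank 𝕜 Kᗮ / Fintype.card ι) ≤ ⨆ i, infDist (b i) K := by
  obtain ⟨i, -, hi⟩ := Finset.exists_le_of_sum_le Finset.univ_nonempty
    (f := fun _ ↦ (finrank 𝕜 Kᗮ / Fintype.card ι : ℝ)) (g := fun i ↦ infDist (b i) K ^ 2)
    (by simp [b.sum_infDist_sq, mul_div_cancel₀, Fintype.card_ne_zero])
  calc √(finrank 𝕜 Kᗮ / Fintype.card ι) ≤ √(infDist (b i) K ^ 2) := Real.sqrt_le_sqrt hi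
    _ = infDist (b i) K := Real.sqrt_sq infDist_nonneg
    _ ≤ ⨆ i, infDist (b i) K :=
        le_ciSup (f := fun i ↦ infDist (b i) K) (Set.finite_range _).bddAbove i

end Projection

section Pairing

variable {𝕜 E ι κ : Type*} [RCLike 𝕜] [NormedAddCommGroup E] [InnerProductSpace 𝕜 E]

theorem Orthonormal.norm_sub_of_ne {v : ι → E} (hv : Orthonormal 𝕜 v) {i j : ι} (hij : i ≠ j) :
    ‖v i - v j‖ = √2 := by
  rw [← Real.sqrt_sq (norm_nonneg _), @norm_sub_sq 𝕜, hv.inner_eq_zero hij, hv.1 i, hv.1 j]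
  norm_num

theorem Orthonormal.infDist_le_of_add_mem {v : ι → E} (hv : Orthonormal 𝕜 v) {i j : ι}
    (hij : i ≠ j) {K : Submodule 𝕜 E} (hK : v i + v j ∈ K) : infDist (v i) K ≤ 1 / √2 := by
  have hmid : (2⁻¹ : 𝕜) • (v i + v j) ∈ K := K.smul_mem _ hK
  calc infDist (v i) K ≤ ‖v i - (2⁻¹ : 𝕜) • (v i + v j)‖ := by
        rw [← dist_eq_norm]; exact infDist_le_dist_of_mem hmid
    _ = 2⁻¹ * √2 := by
        have : v i - (2⁻¹ : 𝕜) • (v i + v j) = (2⁻¹ : 𝕜) • (v i - v j) := by module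
        rw [this, norm_smul, hv.norm_sub_of_ne hij]
        simp
    _ = 1 / √2 := by field_simp; simp

variable (𝕜) in
def pairSumSpan (v : κ ⊕ κ → E) : Submodule 𝕜 E :=
  Submodule.span 𝕜 (Set.range fun j ↦ v (.inl j) + v (.inr j))

variable {v : κ ⊕ κ → E}

theorem Orthonormal.finrank_pairSumSpan [Fintype κ] (hv : Orthonormal 𝕜 v) :
    finrank 𝕜 (pairSumSpan 𝕜 v) = Fintype.card κ := by
  refine finrank_span_eq_card (linearIndependent_of_ne_zero_of_inner_eq_zero ?_ ?_)
  · intro j h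
    have := congrArg (inner 𝕜 (v (.inl j))) h
    simp [inner_add_right, hv.inner_eq_zero Sum.inl_ne_inr, hv.1] at this
  · intro j k hjk
    simp [inner_add_left, inner_add_right, hv.inner_eq_zero, hjk]

theorem Orthonormal.infDist_pairSumSpan_le (hv : Orthonormal 𝕜 v) (s : κ ⊕ κ) :
    infDist (v s) (pairSumSpan 𝕜 v) ≤ 1 / √2 := by
  rcases s with j | j
  · exact hv.infDist_le_of_add_mem Sum.inl_ne_inr (Submodule.subset_span ⟨j, rfl⟩)
  · refine hv.infDist_le_of_add_mem (j := .inl j) Sum.inr_ne_inl ?_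
    rw [add_comm]
    exact Submodule.subset_span ⟨j, rfl⟩

end Pairing

/-- The Kolmogorov N-width of the canonical orthonormal basis
{e_1, …, e_{2N}} of Euclidean ℝ^{2N} equals 1/√2. -/
theorem kolmogorov_nwidth_canonical_basis (N : ℕ) (hN : 1 ≤ N) :
    (⨅ V : {V : Submodule ℝ (EuclideanSpace ℝ (Fin (2 * N))) // finrank ℝ V = N},
      ⨆ k : Fin (2 * N),
        infDist (EuclideanSpace.single k (1:ℝ)) (V.1 : Set (EuclideanSpace ℝ (Fin (2 * N)))))
    = 1 / Real.sqrt 2 := by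
  let e : Fin N ⊕ Fin N ≃ Fin (2 * N) := finSumFinEquiv.trans (finCongr (two_mul N).symm)
  have he : Orthonormal ℝ fun s ↦ EuclideanSpace.single (e s) (1 : ℝ) :=
    EuclideanSpace.orthonormal_single.comp e e.injective
  let V₀ : {V : Submodule ℝ (EuclideanSpace ℝ (Fin (2 * N))) // finrank ℝ V = N} :=
    ⟨pairSumSpan ℝ fun s ↦ EuclideanSpace.single (e s) (1 : ℝ), by simp [he.finrank_pairSumSpan]⟩
  apply le_antisymm
  · refine (ciInf_le ⟨0, ?_⟩ V₀).trans (Real.iSup_le (fun k ↦ ?_) (by positivity))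
    · rintro _ ⟨V, rfl⟩
      exact Real.iSup_nonneg fun _ ↦ infDist_nonneg
    · simpa using he.infDist_pairSumSpan_le (e.symm k)
  · have : Nonempty {V : Submodule ℝ (EuclideanSpace ℝ (Fin (2 * N))) // finrank ℝ V = N} := ⟨V₀⟩
    have : Nonempty (Fin (2 * N)) := ⟨⟨0, by omega⟩⟩
    refine le_ciInf fun V ↦ ?_
    have hV : finrank ℝ V.1ᗮ = N := by
      have := V.1.finrank_add_finrank_orthogonal
      simp only [V.2, finrank_euclideanSpace_fin] at this
      omega
    let b := EuclideanSpace.basisFun (Fin (2 * N)) ℝ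
    calc 1 / √2 = √(N / (2 * N : ℕ)) := by
          rw [Nat.cast_mul, Nat.cast_two, div_mul_cancel_right₀ (by positivity), Real.sqrt_inv,
            one_div]
      _ ≤ _ := by simpa [b, hV] using b.sqrt_finrank_orthogonal_div_card_le_iSup_infDist V.1
end

section
/- Let N ≥ 1. For every N-dimensional linear subspace V of the Euclidean space ℝ^{2N} there exists an index k* ∈ {1, …, 2N} such that the distance from the canonical basis vector e_{k*} to V satisfies inf_{v ∈ V} ‖e_{k*} − v‖₂ ≥ 1/√2. -/
noncomputable section
open Metric Module

/-!
The squared distance from `x` to `K` is `‖P x‖²`, where `P` is the orthogonal projection onto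
`Kᗮ`. Summed over an orthonormal basis these are the diagonal entries of `P`, so they add up to
`trace P = finrank Kᗮ`. Hence some basis vector has squared distance at least the average
`finrank Kᗮ / dim E`, which is `N / 2N = 1/2` for an `N`-dimensional subspace of `ℝ^{2N}`.
-/

namespace Submodule

variable {𝕜 E ι : Type*} [RCLike 𝕜] [NormedAddCommGroup E] [InnerProductSpace 𝕜 E] [Fintype ι]

theorem infDist_eq_norm_starProjection_orthogonal_s2 (K : Submodule 𝕜 E) [K.HasOrthogonalProjection]
    (x : E) : infDist x K = ‖Kᗮ.starProjection x‖ := by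
  rw [starProjection_orthogonal_val, starProjection_minimal, infDist_eq_iInf]
  simp only [dist_eq_norm]
  rfl

theorem sum_sq_norm_starProjection_eq_finrank (K : Submodule 𝕜 E) [FiniteDimensional 𝕜 K]
    (b : OrthonormalBasis ι 𝕜 E) :
    ∑ i, ‖K.starProjection (b i)‖ ^ 2 = finrank 𝕜 K := by
  set c := stdOrthonormalBasis 𝕜 K
  have hproj (x : E) : ‖K.starProjection x‖ ^ 2 = ∑ j, ‖inner 𝕜 (c j : E) x‖ ^ 2 := by
    rw [starProjection_apply, norm_coe, ← c.sum_sq_norm_inner_right]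
    simp
  calc ∑ i, ‖K.starProjection (b i)‖ ^ 2
      = ∑ j, ∑ i, ‖inner 𝕜 (c j : E) (b i)‖ ^ 2 := by simp_rw [hproj]; exact Finset.sum_comm
    _ = ∑ j, ‖(c j : E)‖ ^ 2 := by simp_rw [b.sum_sq_norm_inner_left]
    _ = finrank 𝕜 K := by
      have hc (j) : ‖(c j : E)‖ = 1 := by rw [norm_coe]; exact c.orthonormal.1 j
      simp only [hc, one_pow, Finset.sum_const, Finset.card_univ, Fintype.card_fin, nsmul_one]

theorem exists_finrank_orthogonal_div_card_le_infDist_sq [FiniteDimensional 𝕜 E] [Nonempty ι]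
    (K : Submodule 𝕜 E) (b : OrthonormalBasis ι 𝕜 E) :
    ∃ i, (finrank 𝕜 Kᗮ : ℝ) / Fintype.card ι ≤ infDist (b i) K ^ 2 := by
  have hsum : ∑ _i : ι, (finrank 𝕜 Kᗮ : ℝ) / Fintype.card ι ≤ ∑ i, infDist (b i) K ^ 2 := by
    simp only [infDist_eq_norm_starProjection_orthogonal_s2, sum_sq_norm_starProjection_eq_finrank,
      Finset.sum_const, Finset.card_univ, nsmul_eq_mul]
    rw [mul_div_cancel₀ _ (by positivity)]
  obtain ⟨i, -, hi⟩ := Finset.exists_le_of_sum_le Finset.univ_nonempty hsum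
  exact ⟨i, hi⟩

end Submodule

/-- For every N-dimensional subspace V of Euclidean ℝ^{2N} there is a
canonical basis vector e_{k*} whose distance to V is at least 1/√2. -/
theorem exists_basis_vector_far_from_subspace (N : ℕ) (hN : 1 ≤ N)
    (V : Submodule ℝ (EuclideanSpace ℝ (Fin (2 * N)))) (hV : finrank ℝ V = N) :
    ∃ k : Fin (2 * N),
      1 / Real.sqrt 2 ≤
        infDist (EuclideanSpace.single k (1:ℝ)) (V : Set (EuclideanSpace ℝ (Fin (2 * N)))) := by
  have : Nonempty (Fin (2 * N)) := ⟨⟨0, by omega⟩⟩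
  have hVperp : finrank ℝ Vᗮ = N := by
    have := V.finrank_add_finrank_orthogonal
    rw [hV, finrank_euclideanSpace_fin] at this
    omega
  obtain ⟨k, hk⟩ :=
    Submodule.exists_finrank_orthogonal_div_card_le_infDist_sq V (EuclideanSpace.basisFun _ ℝ)
  refine ⟨k, ?_⟩
  rw [hVperp, Fintype.card_fin, EuclideanSpace.basisFun_apply] at hk
  have hhalf : (N : ℝ) / (2 * N : ℕ) = 1 / 2 := by
    push_cast
    field_simp
  rw [hhalf] at hk
  calc 1 / Real.sqrt 2 = Real.sqrt (1 / 2) := by rw [Real.sqrt_div' _ zero_le_two, Real.sqrt_one]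
    _ ≤ _ := Real.sqrt_le_sqrt hk
    _ = _ := Real.sqrt_sq infDist_nonneg
end
end

section
/- Let k ≥ 1 and N ≥ 1 be integers, and let {e_1, …, e_{kN}} be the canonical orthonormal basis of the Euclidean space ℝ^{kN}. Then the Kolmogorov N-width of the set {e_1, …, e_{kN}} equals √((k−1)/k), i.e., inf over all N-dimensional linear subspaces V ⊆ ℝ^{kN} of max_{1 ≤ j ≤ kN} inf_{v ∈ V} ‖e_j − v‖₂ = √((k−1)/k). -/
/-!
If `P` is the orthogonal projection onto an `N`-dimensional subspace `V` of `ℝ^n`, then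
`dist(e_j, V)² = 1 - ‖P e_j‖²` and `∑ⱼ ‖P e_j‖² = N` (expand `‖P e_j‖²` in an orthonormal basis
of `V` and use Parseval), so the squared distances sum to `n - N` and one of them is at least
`(n - N) / n`, which is `(k - 1) / k` for `n = kN`. Conversely, splitting the coordinates into
`N` blocks of size `k`, the normalized indicator vectors of the blocks span an `N`-dimensional
subspace whose distance to each `e_j` is exactly `√(1 - 1/k)`.
-/

noncomputable section
open Finset Metric Module

open scoped InnerProductSpace

namespace Submodule

variable {𝕜 E : Type*} [RCLike 𝕜] [NormedAddCommGroup E] [InnerProductSpace 𝕜 E]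
  (K : Submodule 𝕜 E) [K.HasOrthogonalProjection]

theorem infDist_eq_norm_sub_starProjection (x : E) :
    infDist x K = ‖x - K.starProjection x‖ := by
  rw [infDist_eq_iInf, starProjection_minimal]
  simp_rw [dist_eq_norm]
  rfl

theorem infDist_sq_eq_norm_sq_sub_norm_sq_starProjection (x : E) :
    infDist x K ^ 2 = ‖x‖ ^ 2 - ‖K.starProjection x‖ ^ 2 := by
  rw [norm_sq_eq_add_norm_sq_starProjection x K, starProjection_orthogonal_val,
    infDist_eq_norm_sub_starProjection]
  ring

theorem infDist_sq_le_of_mem {u : E} (hu : u ∈ K) (hu1 : ‖u‖ = 1) (x : E) :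
    infDist x K ^ 2 ≤ ‖x‖ ^ 2 - ‖⟪u, x⟫_𝕜‖ ^ 2 := by
  have : ‖⟪u, x⟫_𝕜‖ ≤ ‖K.starProjection x‖ := by
    calc ‖⟪u, x⟫_𝕜‖ = ‖⟪u, K.starProjection x⟫_𝕜‖ := by
          rw [← inner_starProjection_left_eq_right, starProjection_eq_self_iff.mpr hu]
      _ ≤ ‖K.starProjection x‖ := by simpa [hu1] using norm_inner_le_norm (𝕜 := 𝕜) u _
  rw [infDist_sq_eq_norm_sq_sub_norm_sq_starProjection]
  gcongr

theorem norm_sq_starProjection_eq_sum {ι : Type*} [Fintype ι] (c : OrthonormalBasis ι 𝕜 K)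
    (x : E) : ‖K.starProjection x‖ ^ 2 = ∑ i, ‖⟪(c i : E), x⟫_𝕜‖ ^ 2 := by
  simpa using (c.sum_sq_norm_inner_right (K.orthogonalProjectionOnto x)).symm

end Submodule

namespace OrthonormalBasis

variable {𝕜 E ι : Type*} [RCLike 𝕜] [NormedAddCommGroup E] [InnerProductSpace 𝕜 E] [Fintype ι]
  (b : OrthonormalBasis ι 𝕜 E) (K : Submodule 𝕜 E) [FiniteDimensional 𝕜 K]

theorem sum_norm_sq_starProjection_s6 :
    ∑ j, ‖K.starProjection (b j)‖ ^ 2 = finrank 𝕜 K := by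
  let c := stdOrthonormalBasis 𝕜 K
  simp_rw [K.norm_sq_starProjection_eq_sum c]
  rw [Finset.sum_comm]
  simp only [b.sum_sq_norm_inner_left, Submodule.norm_coe, c.norm_eq_one]
  simp

theorem sum_infDist_sq_s6 :
    ∑ j, infDist (b j) K ^ 2 = Fintype.card ι - finrank 𝕜 K := by
  simp_rw [K.infDist_sq_eq_norm_sq_sub_norm_sq_starProjection, b.orthonormal.1]
  rw [Finset.sum_sub_distrib, b.sum_norm_sq_starProjection_s6]
  simp

theorem exists_le_infDist_sq [Nonempty ι] :
    ∃ j, (Fintype.card ι - finrank 𝕜 K) / Fintype.card ι ≤ infDist (b j) K ^ 2 := by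
  obtain ⟨j, -, hj⟩ := Finset.exists_le_of_sum_le Finset.univ_nonempty
    (f := fun _ => ((Fintype.card ι : ℝ) - finrank 𝕜 K) / Fintype.card ι)
    (g := fun j => infDist (b j) K ^ 2) <| by
      rw [b.sum_infDist_sq_s6, Finset.sum_const, Finset.card_univ, nsmul_eq_mul,
        mul_div_cancel₀ _ (by positivity)]
  exact ⟨j, hj⟩

end OrthonormalBasis

open scoped RealInnerProductSpace

namespace EuclideanSpace

variable {ι α : Type*} [Fintype ι] [DecidableEq α]

def fiberIndicator (f : ι → α) (a : α) : EuclideanSpace ℝ ι :=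
  WithLp.toLp 2 fun j => if f j = a then 1 else 0

theorem inner_fiberIndicator_single [DecidableEq ι] (f : ι → α) (a : α) (j : ι) :
    ⟪fiberIndicator f a, single j 1⟫ = if f j = a then 1 else 0 := by
  simp [fiberIndicator, inner_single_right]

theorem inner_fiberIndicator (f : ι → α) (a b : α) :
    ⟪fiberIndicator f a, fiberIndicator f b⟫ = if a = b then (#{j | f j = a} : ℝ) else 0 := by
  simp only [fiberIndicator, PiLp.inner_apply, RCLike.inner_apply, conj_trivial, mul_ite,
    mul_one, mul_zero]
  split_ifs with hab
  · subst hab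
    simp +contextual [Finset.sum_boole]
  · exact Finset.sum_eq_zero fun j _ => by grind

theorem orthonormal_fiberIndicator {f : ι → α} {k : ℕ} (hk : 0 < k)
    (hf : ∀ a, #{j | f j = a} = k) :
    Orthonormal ℝ fun a => (√k)⁻¹ • fiberIndicator f a := by
  rw [orthonormal_iff_ite]
  intro a b
  simp only [inner_smul_left, inner_smul_right, inner_fiberIndicator, hf, conj_trivial]
  split_ifs
  · rw [← mul_assoc, ← mul_inv, Real.mul_self_sqrt k.cast_nonneg,
      inv_mul_cancel₀ (by positivity)]
  · simp

theorem exists_finrank_eq_forall_infDist_single_le [DecidableEq ι] [Fintype α] {f : ι → α}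
    {k : ℕ} (hk : 0 < k) (hf : ∀ a, #{j | f j = a} = k) :
    ∃ V : Submodule ℝ (EuclideanSpace ℝ ι), finrank ℝ V = Fintype.card α ∧
      ∀ j, infDist (single j 1) (V : Set (EuclideanSpace ℝ ι)) ≤ √(((k : ℝ) - 1) / k) := by
  set u := fun a => (√k)⁻¹ • fiberIndicator f a
  have hu := orthonormal_fiberIndicator hk hf
  refine ⟨Submodule.span ℝ (Set.range u), finrank_span_eq_card hu.linearIndependent,
    fun j => Real.le_sqrt_of_sq_le ?_⟩
  calc infDist (single j 1) (Submodule.span ℝ (Set.range u) : Set (EuclideanSpace ℝ ι)) ^ 2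
      ≤ ‖single j (1 : ℝ)‖ ^ 2 - ‖⟪u (f j), single j 1⟫‖ ^ 2 :=
        Submodule.infDist_sq_le_of_mem _ (Submodule.subset_span (Set.mem_range_self (f j)))
          (hu.1 _) _
    _ = 1 - (√k)⁻¹ ^ 2 := by
        simp [u, inner_smul_left, inner_fiberIndicator_single]
    _ = ((k : ℝ) - 1) / k := by
        rw [inv_pow, Real.sq_sqrt k.cast_nonneg]
        field_simp

end EuclideanSpace

theorem Finset.card_filter_snd_equiv_eq {ι κ α : Type*} [Fintype ι] [Fintype κ] [DecidableEq α]
    (e : ι ≃ κ × α) (a : α) : #{j | (e j).2 = a} = Fintype.card κ :=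
  calc #{j | (e j).2 = a} = #(univ ×ˢ {a} : Finset (κ × α)) :=
        card_equiv e (by simp [Prod.ext_iff, eq_comm])
    _ = Fintype.card κ := by simp

theorem Real.iInf_iSup_eq_of_forall_exists {ι J : Type*} [Finite J] {g : ι → J → ℝ} {c : ℝ}
    (hle : ∃ i, ∀ j, g i j ≤ c) (hge : ∀ i, ∃ j, c ≤ g i j) : ⨅ i, ⨆ j, g i j = c := by
  obtain ⟨i₀, hi₀⟩ := hle
  have hsup_ge : ∀ i, c ≤ ⨆ j, g i j := fun i =>
    let ⟨j, hj⟩ := hge i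
    hj.trans (le_ciSup (Set.finite_range _).bddAbove j)
  have : Nonempty ι := ⟨i₀⟩
  have : Nonempty J := ⟨(hge i₀).choose⟩
  refine le_antisymm ?_ (le_ciInf hsup_ge)
  exact ciInf_le_of_le ⟨c, Set.forall_mem_range.2 hsup_ge⟩ i₀ (ciSup_le hi₀)

/-- For integers k, N ≥ 1, the Kolmogorov N-width of the canonical
orthonormal basis {e_1, …, e_{kN}} of Euclidean ℝ^{kN} equals √((k−1)/k). -/
theorem kolmogorov_nwidth_canonical_basis_general (k N : ℕ) (hk : 1 ≤ k) (hN : 1 ≤ N) :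
    (⨅ V : {V : Submodule ℝ (EuclideanSpace ℝ (Fin (k * N))) // finrank ℝ V = N},
      ⨆ j : Fin (k * N),
        infDist (EuclideanSpace.single j (1:ℝ)) (V.1 : Set (EuclideanSpace ℝ (Fin (k * N)))))
    = Real.sqrt (((k : ℝ) - 1) / k) := by
  obtain ⟨V₀, hV₀, hV₀_le⟩ := EuclideanSpace.exists_finrank_eq_forall_infDist_single_le hk
    fun a => (card_filter_snd_equiv_eq finProdFinEquiv.symm a).trans (Fintype.card_fin k)
  refine Real.iInf_iSup_eq_of_forall_exists ⟨⟨V₀, by simpa using hV₀⟩, hV₀_le⟩ fun V => ?_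
  have : Nonempty (Fin (k * N)) := ⟨⟨0, Nat.mul_pos hk hN⟩⟩
  obtain ⟨j, hj⟩ := (EuclideanSpace.basisFun (Fin (k * N)) ℝ).exists_le_infDist_sq V.1
  rw [V.2, Fintype.card_fin, EuclideanSpace.basisFun_apply] at hj
  refine ⟨j, (Real.sqrt_le_left infDist_nonneg).2 (le_of_eq_of_le ?_ hj)⟩
  push_cast
  field_simp
end
end

section
/- Let H be a real Hilbert space, N ≥ 1, and let ψ̃_1, …, ψ̃_{2N} ∈ H be an orthonormal family of 2N vectors. Then the Kolmogorov N-width of the set {ψ̃_1, …, ψ̃_{2N}} equals 1/√2, i.e., inf over all N-dimensional linear subspaces V ⊆ H of max_{1 ≤ m ≤ 2N} inf_{v ∈ V} ‖ψ̃_m − v‖_H = 1/√2. -/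
/-!
If `V` has dimension `N`, Bessel's inequality for the `2N` vectors `ψ m`, applied to each vector
of an orthonormal basis of `V`, gives `∑ m, ‖P_V ψ m‖² ≤ N`; by Pythagoras
`∑ m, dist(ψ m, V)² ≥ 2N - N`, so some `ψ m` lies at distance at least `1/√2` from `V`.
Conversely, pairing `ψ i` with `ψ (i + N)`, the span of the `N` orthogonal midpoints
`(ψ i + ψ (i + N)) / 2` lies at distance `‖ψ i - ψ (i + N)‖ / 2 = 1/√2` from every `ψ m`.
-/

noncomputable section
open Metric Module

section

variable {𝕜 E ι : Type*} [RCLike 𝕜] [NormedAddCommGroup E] [InnerProductSpace 𝕜 E]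

theorem Submodule.infDist_eq_norm_sub_starProjection_s7 (K : Submodule 𝕜 E)
    [K.HasOrthogonalProjection] (x : E) :
    infDist x (K : Set E) = ‖x - K.starProjection x‖ := by
  rw [K.starProjection_minimal, infDist_eq_iInf]
  simp only [dist_eq_norm]
  rfl

theorem Submodule.infDist_sq_eq_norm_sq_sub_norm_sq_starProjection_s7 (K : Submodule 𝕜 E)
    [K.HasOrthogonalProjection] (x : E) :
    infDist x (K : Set E) ^ 2 = ‖x‖ ^ 2 - ‖K.starProjection x‖ ^ 2 := by
  rw [K.norm_sq_eq_add_norm_sq_starProjection x, K.starProjection_orthogonal_val,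
    K.infDist_eq_norm_sub_starProjection_s7]
  ring

theorem OrthonormalBasis.norm_sq_starProjection_eq_sum {K : Submodule 𝕜 E}
    [K.HasOrthogonalProjection] [Fintype ι] (b : OrthonormalBasis ι 𝕜 K) (x : E) :
    ‖K.starProjection x‖ ^ 2 = ∑ j, ‖inner 𝕜 (b j : E) x‖ ^ 2 := by
  simpa using (b.sum_sq_norm_inner_right (K.orthogonalProjectionOnto x)).symm

theorem Orthonormal.sum_norm_sq_starProjection_le [Fintype ι] {v : ι → E}
    (hv : Orthonormal 𝕜 v) (K : Submodule 𝕜 E) [FiniteDimensional 𝕜 K] :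
    ∑ i, ‖K.starProjection (v i)‖ ^ 2 ≤ finrank 𝕜 K := by
  let b := stdOrthonormalBasis 𝕜 K
  calc ∑ i, ‖K.starProjection (v i)‖ ^ 2
      = ∑ j, ∑ i, ‖inner 𝕜 (v i) (b j : E)‖ ^ 2 := by
        simp_rw [b.norm_sq_starProjection_eq_sum, ← norm_inner_symm (v _)]
        exact Finset.sum_comm
    _ ≤ ∑ j, ‖(b j : E)‖ ^ 2 := Finset.sum_le_sum fun j _ => hv.sum_inner_products_le _
    _ = finrank 𝕜 K := by simp [Submodule.norm_coe, b.norm_eq_one]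

theorem Orthonormal.card_sub_finrank_le_sum_infDist_sq [Fintype ι] {v : ι → E}
    (hv : Orthonormal 𝕜 v) (K : Submodule 𝕜 E) [FiniteDimensional 𝕜 K] :
    (Fintype.card ι : ℝ) - finrank 𝕜 K ≤ ∑ i, infDist (v i) (K : Set E) ^ 2 := by
  simp_rw [K.infDist_sq_eq_norm_sq_sub_norm_sq_starProjection_s7, hv.1, Finset.sum_sub_distrib]
  simp only [one_pow, Finset.sum_const, Finset.card_univ, nsmul_eq_mul, mul_one]
  linarith [hv.sum_norm_sq_starProjection_le K]

theorem Orthonormal.one_div_sqrt_two_le_iSup_infDist [Fintype ι] [Nonempty ι] {v : ι → E}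
    (hv : Orthonormal 𝕜 v) (K : Submodule 𝕜 E) [FiniteDimensional 𝕜 K]
    (hK : 2 * finrank 𝕜 K ≤ Fintype.card ι) :
    1 / √2 ≤ ⨆ i, infDist (v i) (K : Set E) := by
  set s := ⨆ i, infDist (v i) (K : Set E)
  have hs : 0 ≤ s := Real.iSup_nonneg fun _ => infDist_nonneg
  have hcard : (0 : ℝ) < Fintype.card ι := by exact_mod_cast Fintype.card_pos
  have hK' : (2 : ℝ) * finrank 𝕜 K ≤ Fintype.card ι := by exact_mod_cast hK
  have hle : ∀ i, infDist (v i) (K : Set E) ≤ s :=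
    le_ciSup (Set.finite_range fun i => infDist (v i) (K : Set E)).bddAbove
  have hsum : ∑ i, infDist (v i) (K : Set E) ^ 2 ≤ Fintype.card ι * s ^ 2 := by
    simpa using Finset.sum_le_sum fun i (_ : i ∈ Finset.univ) =>
      pow_le_pow_left₀ infDist_nonneg (hle i) 2
  have : (1 / √2) ^ 2 ≤ s ^ 2 := by
    rw [div_pow, Real.sq_sqrt zero_le_two]
    nlinarith [hv.card_sub_finrank_le_sum_infDist_sq K]
  exact (pow_le_pow_iff_left₀ (by positivity) hs two_ne_zero).mp this

theorem Orthonormal.dist_eq_sqrt_two {v : ι → E} (hv : Orthonormal 𝕜 v) {i j : ι} (hij : i ≠ j) :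
    dist (v i) (v j) = √2 := by
  rw [dist_eq_norm, ← Real.sqrt_sq (norm_nonneg _), @norm_sub_sq 𝕜, hv.1, hv.1,
    hv.inner_eq_zero hij]
  norm_num

variable (𝕜) in
def midpointSpan (φ : ι ⊕ ι → E) : Submodule 𝕜 E :=
  Submodule.span 𝕜 (Set.range fun i => midpoint 𝕜 (φ (.inl i)) (φ (.inr i)))

theorem Orthonormal.inner_midpoint_midpoint [DecidableEq ι] {φ : ι ⊕ ι → E}
    (hφ : Orthonormal 𝕜 φ) (i j : ι) :
    inner 𝕜 (midpoint 𝕜 (φ (.inl i)) (φ (.inr i))) (midpoint 𝕜 (φ (.inl j)) (φ (.inr j))) =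
      if i = j then (2⁻¹ : 𝕜) else 0 := by
  simp only [midpoint_eq_smul_add, invOf_eq_inv, inner_smul_left, inner_smul_right,
    inner_add_left, inner_add_right, orthonormal_iff_ite.mp hφ, Sum.inl.injEq, Sum.inr.injEq,
    reduceCtorEq, if_false, map_inv₀, map_ofNat]
  split_ifs with h
  · subst h; norm_num
  · simp

theorem Orthonormal.finrank_midpointSpan [Fintype ι] {φ : ι ⊕ ι → E} (hφ : Orthonormal 𝕜 φ) :
    finrank 𝕜 (midpointSpan 𝕜 φ) = Fintype.card ι := by
  classical
  refine finrank_span_eq_card (linearIndependent_of_ne_zero_of_inner_eq_zero ?_ ?_)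
  · intro i h
    simpa [h] using hφ.inner_midpoint_midpoint i i
  · intro i j hij
    simpa [hij] using hφ.inner_midpoint_midpoint i j

theorem Orthonormal.infDist_midpointSpan_le {φ : ι ⊕ ι → E} (hφ : Orthonormal 𝕜 φ)
    (a : ι ⊕ ι) : infDist (φ a) (midpointSpan 𝕜 φ : Set E) ≤ 1 / √2 := by
  have hmid : ∀ i, midpoint 𝕜 (φ (.inl i)) (φ (.inr i)) ∈ midpointSpan 𝕜 φ :=
    fun i => Submodule.subset_span ⟨i, rfl⟩
  have hdist : ∀ i, dist (φ (.inl i)) (φ (.inr i)) = √2 :=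
    fun i => hφ.dist_eq_sqrt_two Sum.inl_ne_inr
  have hhalf : 2⁻¹ * √2 = 1 / √2 := by rw [← Real.sqrt_div_self', div_eq_inv_mul]
  rcases a with i | i
  · calc infDist (φ (.inl i)) _ ≤ dist (φ (.inl i)) (midpoint 𝕜 (φ (.inl i)) (φ (.inr i))) :=
          infDist_le_dist_of_mem (hmid i)
      _ = 1 / √2 := by simp [dist_left_midpoint (𝕜 := 𝕜), hdist, hhalf]
  · calc infDist (φ (.inr i)) _ ≤ dist (φ (.inr i)) (midpoint 𝕜 (φ (.inl i)) (φ (.inr i))) :=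
          infDist_le_dist_of_mem (hmid i)
      _ = 1 / √2 := by simp [dist_right_midpoint (𝕜 := 𝕜), hdist, hhalf]

end

theorem kolmogorov_nwidth_orthonormal_family_general {H : Type*}
    [NormedAddCommGroup H] [InnerProductSpace ℝ H]
    (N : ℕ) (hN : 1 ≤ N) (ψ : Fin (2 * N) → H) (hψ : Orthonormal ℝ ψ) :
    (⨅ V : {V : Submodule ℝ H // finrank ℝ V = N},
      ⨆ m : Fin (2 * N), infDist (ψ m) (V.1 : Set H))
    = 1 / Real.sqrt 2 := by
  have : Nonempty (Fin (2 * N)) := ⟨⟨0, by omega⟩⟩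
  let e : Fin N ⊕ Fin N ≃ Fin (2 * N) := finSumFinEquiv.trans (finCongr (two_mul N).symm)
  have hφ : Orthonormal ℝ (ψ ∘ e) := hψ.comp e e.injective
  let V₀ : {V : Submodule ℝ H // finrank ℝ V = N} :=
    ⟨midpointSpan ℝ (ψ ∘ e), by simpa using hφ.finrank_midpointSpan⟩
  have upper : ⨆ m, infDist (ψ m) (V₀.1 : Set H) ≤ 1 / √2 :=
    ciSup_le fun m => by simpa using hφ.infDist_midpointSpan_le (e.symm m)
  have : Nonempty {V : Submodule ℝ H // finrank ℝ V = N} := ⟨V₀⟩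
  refine le_antisymm ((ciInf_le ⟨0, ?_⟩ V₀).trans upper) (le_ciInf fun V => ?_)
  · rintro _ ⟨V, rfl⟩
    exact Real.iSup_nonneg fun _ => infDist_nonneg
  · have : FiniteDimensional ℝ V.1 := .of_finrank_pos (by rw [V.2]; omega)
    exact hψ.one_div_sqrt_two_le_iSup_infDist V.1 (by simp [V.2])

/-- In a real Hilbert space, the Kolmogorov N-width of any orthonormal
family of 2N vectors equals 1/√2. -/
theorem kolmogorov_nwidth_orthonormal_family {H : Type*}
    [NormedAddCommGroup H] [InnerProductSpace ℝ H] [CompleteSpace H]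
    (N : ℕ) (hN : 1 ≤ N) (ψ : Fin (2 * N) → H) (hψ : Orthonormal ℝ ψ) :
    (⨅ V : {V : Submodule ℝ H // finrank ℝ V = N},
      ⨆ m : Fin (2 * N), infDist (ψ m) (V.1 : Set H))
    = 1 / Real.sqrt 2 :=
  kolmogorov_nwidth_orthonormal_family_general N hN ψ hψ
end
end

section
/- Let μ ∈ [0,1] and define φ_μ : ℝ × ℝ → ℝ by φ_μ(t,x) = 1 if x < −μt, φ_μ(t,x) = −1 if x ≥ μt, and φ_μ(t,x) = 0 otherwise. Then φ_μ satisfies the wave equation ∂_tt u − μ² ∂_xx u = 0 in the interior of the space-time domain Ω_I = (0,1)×(−1,1) in the distributional sense: for every smooth test function φ : ℝ × ℝ → ℝ with compact support contained in (0,1)×(−1,1), one has ∫₀¹ ∫_{−1}^{1} φ_μ(t,x) (∂_tt φ(t,x) − μ² ∂_xx φ(t,x)) dx dt = 0. -/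
noncomputable section
open MeasureTheory Set

/-- Second partial derivative in the first (time) variable. -/
def dtt (φ : ℝ × ℝ → ℝ) (p : ℝ × ℝ) : ℝ := iteratedDeriv 2 (fun s => φ (s, p.2)) p.1

/-- Second partial derivative in the second (space) variable. -/
def dxx (φ : ℝ × ℝ → ℝ) (p : ℝ × ℝ) : ℝ := iteratedDeriv 2 (fun y => φ (p.1, y)) p.2

/-- The parametrized solution φ_μ: 1 for x < −μt, −1 for x ≥ μt, 0 otherwise. -/
def phiFun (μ : ℝ) : ℝ × ℝ → ℝ := fun p =>
  if p.2 < -μ * p.1 then 1 else if μ * p.1 ≤ p.2 then -1 else 0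

namespace WaveAux

/-- directional partial derivative -/
def pd (v : ℝ × ℝ) (f : ℝ × ℝ → ℝ) : ℝ × ℝ → ℝ := fun p => fderiv ℝ f p v

lemma contDiff_pd (v : ℝ × ℝ) {f : ℝ × ℝ → ℝ} (hf : ContDiff ℝ (⊤ : ℕ∞) f) :
    ContDiff ℝ (⊤ : ℕ∞) (pd v f) :=
  ((ContinuousLinearMap.apply ℝ ℝ v).contDiff).comp (hf.fderiv_right (by simp))

lemma hasDerivAt_line {f : ℝ × ℝ → ℝ} (hf : ContDiff ℝ (⊤ : ℕ∞) f) (y c t : ℝ) :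
    HasDerivAt (fun s => f (s, y + c * s)) (fderiv ℝ f (t, y + c * t) (1, c)) t := by
  have hl : HasDerivAt (fun s => ((s, y + c * s) : ℝ × ℝ)) (1, c) t := by
    have h1 : HasDerivAt (fun s : ℝ => s) 1 t := hasDerivAt_id t
    have h2 : HasDerivAt (fun s : ℝ => y + c * s) c t := by
      simpa using (h1.const_mul c).const_add y
    exact HasDerivAt.prodMk h1 h2
  exact ((hf.differentiable (by simp) _).hasFDerivAt).comp_hasDerivAt t hl

lemma hasDerivAt_horiz {f : ℝ × ℝ → ℝ} (hf : ContDiff ℝ (⊤ : ℕ∞) f) (x t : ℝ) :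
    HasDerivAt (fun s => f (s, x)) (pd (1, 0) f (t, x)) t := by
  have := hasDerivAt_line hf x 0 t
  simpa [pd] using this

lemma hasDerivAt_vert {f : ℝ × ℝ → ℝ} (hf : ContDiff ℝ (⊤ : ℕ∞) f) (t x : ℝ) :
    HasDerivAt (fun z => f (t, z)) (pd (0, 1) f (t, x)) x := by
  have hl : HasDerivAt (fun z : ℝ => ((t, z) : ℝ × ℝ)) (0, 1) x :=
    HasDerivAt.prodMk (hasDerivAt_const x t) (hasDerivAt_id x)
  exact ((hf.differentiable (by simp) _).hasFDerivAt).comp_hasDerivAt x hl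

lemma fderiv_apply_comb {f : ℝ × ℝ → ℝ} (hf : ContDiff ℝ (⊤ : ℕ∞) f) (p : ℝ × ℝ) (c : ℝ) :
    fderiv ℝ f p (1, c) = pd (1, 0) f p + c * pd (0, 1) f p := by
  have : ((1 : ℝ), c) = ((1 : ℝ), (0 : ℝ)) + c • ((0 : ℝ), (1 : ℝ)) := by simp
  rw [this, map_add, (fderiv ℝ f p).map_smul]
  simp [pd]

lemma dtt_eq {f : ℝ × ℝ → ℝ} (hf : ContDiff ℝ (⊤ : ℕ∞) f) (p : ℝ × ℝ) :
    dtt f p = pd (1, 0) (pd (1, 0) f) p := by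
  have h1 : (deriv fun s => f (s, p.2)) = fun s => pd (1, 0) f (s, p.2) := by
    funext s; exact (hasDerivAt_horiz hf p.2 s).deriv
  rw [dtt, iteratedDeriv_succ, iteratedDeriv_one, h1]
  exact (hasDerivAt_horiz (contDiff_pd _ hf) p.2 p.1).deriv

lemma dxx_eq {f : ℝ × ℝ → ℝ} (hf : ContDiff ℝ (⊤ : ℕ∞) f) (p : ℝ × ℝ) :
    dxx f p = pd (0, 1) (pd (0, 1) f) p := by
  have h1 : (deriv fun z => f (p.1, z)) = fun z => pd (0, 1) f (p.1, z) := by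
    funext z; exact (hasDerivAt_vert hf p.1 z).deriv
  rw [dxx, iteratedDeriv_succ, iteratedDeriv_one, h1]
  exact (hasDerivAt_vert (contDiff_pd _ hf) p.1 p.2).deriv

lemma pd_symm {f : ℝ × ℝ → ℝ} (hf : ContDiff ℝ (⊤ : ℕ∞) f) (p : ℝ × ℝ) :
    fderiv ℝ (pd (1, 0) f) p (0, 1) = fderiv ℝ (pd (0, 1) f) p (1, 0) := by
  have hD : HasFDerivAt (fderiv ℝ f) (fderiv ℝ (fderiv ℝ f) p) p :=
    (((hf.fderiv_right (m := (⊤ : ℕ∞)) (by simp)).differentiable (by simp)) p).hasFDerivAt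
  have key : ∀ v w : ℝ × ℝ, fderiv ℝ (pd v f) p w = fderiv ℝ (fderiv ℝ f) p w v := by
    intro v w
    have h1 : HasFDerivAt (pd v f)
        ((ContinuousLinearMap.apply ℝ ℝ v).comp (fderiv ℝ (fderiv ℝ f) p)) p :=
      (ContinuousLinearMap.apply ℝ ℝ v).hasFDerivAt.comp p hD
    rw [h1.fderiv]; rfl
  rw [key, key]
  exact (hf.contDiffAt.isSymmSndFDerivAt (by rw [minSmoothness_of_isRCLikeNormedField]; exact WithTop.coe_le_coe.mpr le_top)).eq _ _

lemma fderiv_zero_of_nmem {f : ℝ × ℝ → ℝ} {K : Set (ℝ × ℝ)} (hK : IsClosed K)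
    (hf : ∀ q ∉ K, f q = 0) {p : ℝ × ℝ} (hp : p ∉ K) : fderiv ℝ f p = 0 := by
  have hev : f =ᶠ[nhds p] (fun _ => (0 : ℝ)) := by
    filter_upwards [hK.isOpen_compl.mem_nhds hp] with q hq using hf q hq
  rw [hev.fderiv_eq, fderiv_fun_const]; rfl

lemma pd_zero_of_nmem {f : ℝ × ℝ → ℝ} {K : Set (ℝ × ℝ)} (hK : IsClosed K)
    (hf : ∀ q ∉ K, f q = 0) (v : ℝ × ℝ) {p : ℝ × ℝ} (hp : p ∉ K) : pd v f p = 0 := by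
  rw [pd, fderiv_zero_of_nmem hK hf hp]; rfl

lemma pd_symm' {f : ℝ × ℝ → ℝ} (hf : ContDiff ℝ (⊤ : ℕ∞) f) (p : ℝ × ℝ) :
    pd (0, 1) (pd (1, 0) f) p = pd (1, 0) (pd (0, 1) f) p := pd_symm hf p

lemma phi_zero_off {φ : ℝ × ℝ → ℝ} : ∀ q ∉ tsupport φ, φ q = 0 := fun _ hq =>
  image_eq_zero_of_notMem_tsupport hq

/-- The wave operator applied to φ, in partial-derivative form. -/
def Lf (μ : ℝ) (φ : ℝ × ℝ → ℝ) : ℝ × ℝ → ℝ := fun p =>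
  pd (1, 0) (pd (1, 0) φ) p - μ ^ 2 * pd (0, 1) (pd (0, 1) φ) p

section Main

variable {μ : ℝ} {φ : ℝ × ℝ → ℝ}

lemma Lf_eq (hs : ContDiff ℝ (⊤ : ℕ∞) φ) :
    (fun p => dtt φ p - μ ^ 2 * dxx φ p) = Lf μ φ :=
  funext fun p => by rw [dtt_eq hs, dxx_eq hs]; rfl

lemma Lf_cont (hs : ContDiff ℝ (⊤ : ℕ∞) φ) : Continuous (Lf μ φ) :=
  ((contDiff_pd _ (contDiff_pd _ hs)).continuous).sub
    (continuous_const.mul (contDiff_pd _ (contDiff_pd _ hs)).continuous)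

lemma pd_zero_off (v : ℝ × ℝ) {p : ℝ × ℝ} (hp : p ∉ tsupport φ) : pd v φ p = 0 :=
  pd_zero_of_nmem (isClosed_tsupport φ) phi_zero_off v hp

lemma pd2_zero_off (v w : ℝ × ℝ) {p : ℝ × ℝ} (hp : p ∉ tsupport φ) :
    pd v (pd w φ) p = 0 :=
  pd_zero_of_nmem (isClosed_tsupport φ) (fun _ hq => pd_zero_off w hq) v hp

lemma Lf_zero {p : ℝ × ℝ} (hp : p ∉ tsupport φ) : Lf μ φ p = 0 := by
  simp [Lf, pd2_zero_off _ _ hp]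

lemma lineIntegral_zero (hs : ContDiff ℝ (⊤ : ℕ∞) φ)
    (hsub : tsupport φ ⊆ Ioo (0:ℝ) 1 ×ˢ Ioo (-1:ℝ) 1)
    {c : ℝ} (hc : c ^ 2 = μ ^ 2) (y : ℝ) :
    ∫ t : ℝ, Lf μ φ (t, y + c * t) = 0 := by
  set w : ℝ → ℝ := fun t => pd (1, 0) φ (t, y + c * t) - c * pd (0, 1) φ (t, y + c * t)
    with hw_def
  have hline : ContDiff ℝ (⊤ : ℕ∞) (fun t : ℝ => ((t, y + c * t) : ℝ × ℝ)) :=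
    contDiff_id.prodMk (contDiff_const.add (contDiff_const.mul contDiff_id))
  have hw : ∀ t, HasDerivAt w (Lf μ φ (t, y + c * t)) t := by
    intro t
    have h1 := hasDerivAt_line (contDiff_pd (1, 0) hs) y c t
    have h2 := (hasDerivAt_line (contDiff_pd (0, 1) hs) y c t).const_mul c
    have h3 := h1.sub h2
    refine h3.congr_deriv (Eq.symm ?_)
    rw [fderiv_apply_comb (contDiff_pd _ hs) _ c, fderiv_apply_comb (contDiff_pd _ hs) _ c,
      pd_symm' hs]
    simp only [Lf]
    linear_combination (pd (0, 1) (pd (0, 1) φ) (t, y + c * t)) * hc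
  have hnm : ∀ t : ℝ, t ∉ Icc (0:ℝ) 1 → ((t, y + c * t) : ℝ × ℝ) ∉ tsupport φ := by
    intro t ht hmem
    exact ht (Ioo_subset_Icc_self (hsub hmem).1)
  have hcs : HasCompactSupport w := by
    refine HasCompactSupport.intro (isCompact_Icc (a := (0:ℝ)) (b := 1)) fun t ht => ?_
    simp [hw_def, pd_zero_off _ (hnm t ht)]
  have hw1 : ContDiff ℝ 1 w :=
    (((contDiff_pd (1, 0) hs).comp hline).sub
      (contDiff_const.mul ((contDiff_pd (0, 1) hs).comp hline))).of_le (by simp)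
  have hderiv : (fun t => Lf μ φ (t, y + c * t)) = deriv w :=
    funext fun t => ((hw t).deriv).symm
  have hcont : Continuous fun t => Lf μ φ (t, y + c * t) :=
    (Lf_cont hs).comp hline.continuous
  have hcsd : HasCompactSupport fun t => Lf μ φ (t, y + c * t) :=
    HasCompactSupport.intro (isCompact_Icc (a := (0:ℝ)) (b := 1)) (fun t ht => Lf_zero (hnm t ht))
  have hint : Integrable fun t => Lf μ φ (t, y + c * t) :=
    hcont.integrable_of_hasCompactSupport hcsd
  rw [hderiv] at hint ⊢
  rw [← intervalIntegral.integral_Iic_add_Ioi hint.integrableOn hint.integrableOn,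
    HasCompactSupport.integral_Iic_deriv_eq hw1 hcs 0,
    HasCompactSupport.integral_Ioi_deriv_eq hw1 hcs 0]
  ring

end Main

section Main2

variable {μ : ℝ} {φ : ℝ × ℝ → ℝ}

lemma slice_integrable (hs : ContDiff ℝ (⊤ : ℕ∞) φ)
    (hsub : tsupport φ ⊆ Ioo (0:ℝ) 1 ×ˢ Ioo (-1:ℝ) 1) (t : ℝ) :
    Integrable (fun x => Lf μ φ (t, x)) := by
  have hc : Continuous fun x => Lf μ φ (t, x) :=
    (Lf_cont hs).comp (continuous_const.prodMk continuous_id)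
  have hcs : HasCompactSupport fun x => Lf μ φ (t, x) := by
    refine HasCompactSupport.intro (isCompact_Icc (a := (-1:ℝ)) (b := 1)) fun x hx => ?_
    exact Lf_zero fun hm => hx (Ioo_subset_Icc_self (hsub hm).2)
  exact hc.integrable_of_hasCompactSupport hcs

lemma uncurry_integrable (hs : ContDiff ℝ (⊤ : ℕ∞) φ)
    (hsub : tsupport φ ⊆ Ioo (0:ℝ) 1 ×ˢ Ioo (-1:ℝ) 1)
    {c : ℝ} (hc1 : |c| ≤ 1) {s : Set ℝ} (hms : MeasurableSet s) :
    Integrable (Function.uncurry fun t y => s.indicator (fun y => Lf μ φ (t, y + c * t)) y)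
      ((volume : Measure ℝ).prod volume) := by
  have hGc : Continuous fun q : ℝ × ℝ => Lf μ φ (q.1, q.2 + c * q.1) :=
    (Lf_cont hs).comp (continuous_fst.prodMk (continuous_snd.add (continuous_const.mul
      continuous_fst)))
  have hGcs : HasCompactSupport fun q : ℝ × ℝ => Lf μ φ (q.1, q.2 + c * q.1) := by
    refine HasCompactSupport.intro
      ((isCompact_Icc (a := (0:ℝ)) (b := 1)).prod (isCompact_Icc (a := (-2:ℝ)) (b := 2)))
      fun q hq => ?_
    refine Lf_zero fun hm => hq ?_
    have h1 := (hsub hm).1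
    have h2 := (hsub hm).2
    simp only [mem_Ioo] at h1 h2
    have habs : |c * q.1| ≤ 1 := by
      rw [abs_mul]
      have : |q.1| ≤ 1 := by rw [abs_le]; constructor <;> linarith [h1.1, h1.2]
      calc |c| * |q.1| ≤ 1 * 1 := by
            apply mul_le_mul hc1 this (abs_nonneg _) (by norm_num)
        _ = 1 := by norm_num
    rw [abs_le] at habs
    constructor
    · exact ⟨le_of_lt h1.1, le_of_lt h1.2⟩
    · simp only [mem_Icc]
      constructor <;> nlinarith [h2.1, h2.2, habs.1, habs.2]
  have hG : Integrable (fun q : ℝ × ℝ => Lf μ φ (q.1, q.2 + c * q.1)) :=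
    hGc.integrable_of_hasCompactSupport hGcs
  rw [← Measure.volume_eq_prod]
  have hmeas : MeasurableSet (Prod.snd ⁻¹' s : Set (ℝ × ℝ)) := measurable_snd hms
  have heq : (Function.uncurry fun t y => s.indicator (fun y => Lf μ φ (t, y + c * t)) y)
      = (Prod.snd ⁻¹' s).indicator (fun q : ℝ × ℝ => Lf μ φ (q.1, q.2 + c * q.1)) := by
    funext q
    simp only [Function.uncurry, Set.indicator_apply, mem_preimage]
    rfl
  rw [heq]
  exact hG.indicator hmeas

lemma swap_zero (hs : ContDiff ℝ (⊤ : ℕ∞) φ)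
    (hsub : tsupport φ ⊆ Ioo (0:ℝ) 1 ×ˢ Ioo (-1:ℝ) 1)
    {c : ℝ} (hc : c ^ 2 = μ ^ 2) (hc1 : |c| ≤ 1) {s : Set ℝ} (hms : MeasurableSet s) :
    ∫ t : ℝ, ∫ y : ℝ, s.indicator (fun y => Lf μ φ (t, y + c * t)) y = 0 := by
  rw [show (∫ t : ℝ, ∫ y : ℝ, s.indicator (fun y => Lf μ φ (t, y + c * t)) y)
      = ∫ t : ℝ, ∫ y : ℝ, s.indicator (fun y => Lf μ φ (t, y + c * t)) y ∂volume ∂volume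
      from rfl]
  rw [MeasureTheory.integral_integral_swap (uncurry_integrable hs hsub hc1 hms)]
  have hinner : ∀ y : ℝ, (∫ t : ℝ, s.indicator (fun y => Lf μ φ (t, y + c * t)) y) = 0 := by
    intro y
    by_cases hy : y ∈ s
    · simp only [Set.indicator_of_mem hy]
      exact lineIntegral_zero hs hsub hc y
    · simp [Set.indicator_of_notMem hy]
  simp only [hinner, integral_zero]

end Main2

end WaveAux

open WaveAux

/-- φ_μ satisfies the wave equation ∂_tt u − μ²∂_xx u = 0 in the interior
of Ω_I = (0,1)×(−1,1) in the distributional sense. -/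
theorem phi_solves_wave_equation_in_interior (μ : ℝ) (hμ0 : 0 ≤ μ) (hμ1 : μ ≤ 1)
    (φ : ℝ × ℝ → ℝ) (hsmooth : ContDiff ℝ (⊤ : ℕ∞) φ) (hsupp : HasCompactSupport φ)
    (hsub : tsupport φ ⊆ Ioo (0:ℝ) 1 ×ˢ Ioo (-1:ℝ) 1) :
    (∫ t in Ioo (0:ℝ) 1, ∫ x in Ioo (-1:ℝ) 1,
        phiFun μ (t, x) * (dtt φ (t, x) - μ ^ 2 * dxx φ (t, x))) = 0 := by
  have hLf : ∀ p : ℝ × ℝ, dtt φ p - μ ^ 2 * dxx φ p = Lf μ φ p := fun p =>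
    congrFun (Lf_eq hsmooth) p
  have inner_eq : ∀ t : ℝ,
      (∫ x in Ioo (-1:ℝ) 1, phiFun μ (t, x) * (dtt φ (t, x) - μ ^ 2 * dxx φ (t, x)))
      = ∫ x : ℝ, phiFun μ (t, x) * Lf μ φ (t, x) := by
    intro t
    have h1 : (∫ x in Ioo (-1:ℝ) 1, phiFun μ (t, x) * (dtt φ (t, x) - μ ^ 2 * dxx φ (t, x)))
        = ∫ x in Ioo (-1:ℝ) 1, phiFun μ (t, x) * Lf μ φ (t, x) := by
      simp only [hLf]
    rw [h1]
    apply setIntegral_eq_integral_of_forall_compl_eq_zero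
    intro x hx
    rw [Lf_zero (fun hm => hx (hsub hm).2), mul_zero]
  rw [show (fun t => ∫ x in Ioo (-1:ℝ) 1,
        phiFun μ (t, x) * (dtt φ (t, x) - μ ^ 2 * dxx φ (t, x)))
      = fun t => ∫ x : ℝ, phiFun μ (t, x) * Lf μ φ (t, x) from funext inner_eq]
  have houter : ∀ t : ℝ, t ∉ Ioo (0:ℝ) 1 →
      (∫ x : ℝ, phiFun μ (t, x) * Lf μ φ (t, x)) = 0 := by
    intro t ht
    have hz : ∀ x : ℝ, Lf μ φ (t, x) = 0 := fun x =>
      Lf_zero (fun hm => ht (hsub hm).1)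
    simp [hz]
  rw [setIntegral_eq_integral_of_forall_compl_eq_zero houter]
  have key : ∀ t : ℝ, (∫ x : ℝ, phiFun μ (t, x) * Lf μ φ (t, x)) =
      (∫ y : ℝ, (Iio (0:ℝ)).indicator (fun y => Lf μ φ (t, y + -μ * t)) y)
      - ∫ y : ℝ, (Ici (0:ℝ)).indicator (fun y => Lf μ φ (t, y + μ * t)) y := by
    intro t
    by_cases hμt : 0 ≤ μ * t
    · have hfe : (fun x => phiFun μ (t, x) * Lf μ φ (t, x)) =
          fun x => (Iio (-μ * t)).indicator (fun x => Lf μ φ (t, x)) x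
            - (Ici (μ * t)).indicator (fun x => Lf μ φ (t, x)) x := by
        funext x
        by_cases h1 : x < -(μ * t)
        · have h2 : ¬ μ * t ≤ x := by
            intro h; nlinarith
          simp [phiFun, Set.indicator_apply, neg_mul, h1, h2]
        · by_cases h2 : μ * t ≤ x
          · simp [phiFun, Set.indicator_apply, neg_mul, h1, h2]
          · simp [phiFun, Set.indicator_apply, neg_mul, h1, h2]
      rw [hfe]
      have hi := slice_integrable (μ := μ) hsmooth hsub t
      rw [integral_sub (hi.indicator measurableSet_Iio) (hi.indicator measurableSet_Ici)]
      congr 1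
      · have htr := integral_add_right_eq_self (μ := (volume : Measure ℝ))
          (fun x => (Iio (-μ * t)).indicator (fun x => Lf μ φ (t, x)) x) (-μ * t)
        rw [← htr]
        congr 1
        funext y
        simp only [Set.indicator_apply, mem_Iio]
        have : y + -μ * t < -μ * t ↔ y < 0 := by constructor <;> intro h <;> linarith
        exact if_congr this rfl rfl
      · have htr := integral_add_right_eq_self (μ := (volume : Measure ℝ))
          (fun x => (Ici (μ * t)).indicator (fun x => Lf μ φ (t, x)) x) (μ * t)
        rw [← htr]
        congr 1
        funext y
        simp only [Set.indicator_apply, mem_Ici]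
        have : μ * t ≤ y + μ * t ↔ 0 ≤ y := by constructor <;> intro h <;> linarith
        exact if_congr this rfl rfl
    · have ht : t < 0 := by
        by_contra h
        push_neg at h
        exact hμt (mul_nonneg hμ0 h)
      have hz : ∀ z : ℝ, Lf μ φ (t, z) = 0 := fun z =>
        Lf_zero fun hm => absurd (hsub hm).1.1 (not_lt.mpr (le_of_lt ht))
      simp [hz]
  rw [show (fun t : ℝ => ∫ x : ℝ, phiFun μ (t, x) * Lf μ φ (t, x))
      = fun t : ℝ => (∫ y : ℝ, (Iio (0:ℝ)).indicator (fun y => Lf μ φ (t, y + -μ * t)) y)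
        - ∫ y : ℝ, (Ici (0:ℝ)).indicator (fun y => Lf μ φ (t, y + μ * t)) y
      from funext key]
  have habs1 : |(-μ)| ≤ 1 := by rw [abs_neg, abs_of_nonneg hμ0]; exact hμ1
  have habs2 : |μ| ≤ 1 := by rw [abs_of_nonneg hμ0]; exact hμ1
  have hIA := uncurry_integrable (μ := μ) hsmooth hsub (c := -μ) habs1
    (measurableSet_Iio (a := (0:ℝ)))
  have hIB := uncurry_integrable (μ := μ) hsmooth hsub (c := μ) habs2
    (measurableSet_Ici (a := (0:ℝ)))
  have h1 : Integrable (fun t : ℝ =>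
      ∫ y : ℝ, (Iio (0:ℝ)).indicator (fun y => Lf μ φ (t, y + -μ * t)) y) volume := by
    simpa [Function.uncurry] using hIA.integral_prod_left
  have h2 : Integrable (fun t : ℝ =>
      ∫ y : ℝ, (Ici (0:ℝ)).indicator (fun y => Lf μ φ (t, y + μ * t)) y) volume := by
    simpa [Function.uncurry] using hIB.integral_prod_left
  rw [integral_sub h1 h2]
  rw [swap_zero hsmooth hsub (by ring : (-μ) ^ 2 = μ ^ 2) habs1 measurableSet_Iio,
    swap_zero hsmooth hsub (rfl : μ ^ 2 = μ ^ 2) habs2 measurableSet_Ici]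
  simp
end
end
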